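/- Define p_{T|n} = (1/(n·pₙ))·∑_{k=0}^{n} k·p_{k,n-k}, with pₙ and p_{m,j} as the STIT I-segment integral formulas. Then lim_{n→∞} p_{T|n} = 2/3. -/

import Mathlib

/-!
Write `D = 3 - (1 - a)(2 - b)` and `S = 3 - (1 - a)(3 - b)`, so that
`S = 2a + (1 - (1 - a)(1 - b)) = 3a + b(1 - a)`. The weighted binomial identity
`∑ k C(n,k) x^k y^(n-k) = n x (x + y)^(n-1)` with `x = 2a` collapses the numerator of `p_{T|n}`
to `6n G_{n-1}`, and splitting `S = 3a + b(1 - a)` once in `pₙ` gives `pₙ = 9 G_{n-1} + 3 H_{n-1}`,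
so `p_{T|n} = 2G / (3G + H)`. On the unit square `S ≥ 3a` and `D ≤ 3`, so `G_m ≥ B(m+1,3)/9`,
while `S/D ≤ (2 + a)/3` gives `H_m ≤ 243 B(m,4) = 972 B(m+1,3)/(m+1)`, where
`B(p,q) = ∫₀¹ xᵖ(1-x)^q`. Hence `|p_{T|n} - 2/3| ≤ 2H/(9G) = O(1/n)`.
-/

noncomputable def pTX (m j : ℕ) : ℝ :=
  3 * 2^m * (Nat.choose (m + j) m : ℝ) *
    ∫ a in (0:ℝ)..1, ∫ b in (0:ℝ)..1,
      (1 - a)^3 * a^m * (1 - (1 - a) * (1 - b))^j / (3 - (1 - a) * (2 - b))^(m + j + 1)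

noncomputable def p (n : ℕ) : ℝ :=
  3 * ∫ a in (0:ℝ)..1, ∫ b in (0:ℝ)..1,
    (1 - a)^3 * (3 - (1 - a) * (3 - b))^n / (3 - (1 - a) * (2 - b))^(n + 1)

noncomputable def pTgiven (n : ℕ) : ℝ :=
  (1 / ((n : ℝ) * p n)) * ∑ k ∈ Finset.range (n + 1), (k : ℝ) * pTX k (n - k)

open MeasureTheory Set Finset Filter

theorem intervalIntegral_intervalIntegral_eq_setIntegral_prod {f : ℝ → ℝ → ℝ}
    {a₀ a₁ b₀ b₁ : ℝ} (ha : a₀ ≤ a₁) (hb : b₀ ≤ b₁)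
    (hf : IntegrableOn (Function.uncurry f) (Ioc a₀ a₁ ×ˢ Ioc b₀ b₁)) :
    ∫ a in a₀..a₁, ∫ b in b₀..b₁, f a b = ∫ z in Ioc a₀ a₁ ×ˢ Ioc b₀ b₁, f z.1 z.2 := by
  simp only [intervalIntegral.integral_of_le ha, intervalIntegral.integral_of_le hb]
  rw [Measure.volume_eq_prod, setIntegral_prod (fun z => f z.1 z.2) hf]

theorem integral_pow_mul_one_sub_pow_succ (m k : ℕ) :
    (m + 1 : ℝ) * ∫ x in (0 : ℝ)..1, x ^ m * (1 - x) ^ (k + 1) =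
      (k + 1) * ∫ x in (0 : ℝ)..1, x ^ (m + 1) * (1 - x) ^ k := by
  have hderiv : ∀ x ∈ uIcc (0 : ℝ) 1, HasDerivAt (fun x => x ^ (m + 1) * (1 - x) ^ (k + 1))
      ((m + 1) * (x ^ m * (1 - x) ^ (k + 1)) - (k + 1) * (x ^ (m + 1) * (1 - x) ^ k)) x := by
    intro x _
    have h : HasDerivAt (fun x : ℝ => (1 - x) ^ (k + 1)) ((k + 1 : ℕ) * (1 - x) ^ k * -1) x :=
      ((hasDerivAt_id' x).const_sub 1).pow (k + 1)
    refine ((hasDerivAt_pow (m + 1) x).fun_mul h).congr_deriv ?_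
    push_cast [Nat.add_sub_cancel]
    ring
  have hFTC := intervalIntegral.integral_eq_sub_of_hasDerivAt hderiv
    (Continuous.intervalIntegrable (by fun_prop) _ _)
  rw [intervalIntegral.integral_sub (Continuous.intervalIntegrable (by fun_prop) _ _)
      (Continuous.intervalIntegrable (by fun_prop) _ _), intervalIntegral.integral_const_mul,
    intervalIntegral.integral_const_mul] at hFTC
  simp only [one_pow, sub_self, zero_pow (Nat.succ_ne_zero _), mul_zero, sub_zero] at hFTC
  linarith

theorem sum_mul_choose_mul_pow_mul_pow {R : Type*} [CommRing R] (n : ℕ) (x y : R) :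
    ∑ k ∈ range (n + 1), (k : R) * n.choose k * x ^ k * y ^ (n - k) =
      n * x * (x + y) ^ (n - 1) := by
  cases n with
  | zero => simp
  | succ m =>
    rw [sum_range_succ', add_pow]
    simp only [Nat.cast_zero, zero_mul, add_zero, Nat.add_sub_cancel, Nat.cast_add, Nat.cast_one,
      mul_sum]
    refine sum_congr rfl fun j _ => ?_
    have h := congrArg (Nat.cast : ℕ → R) (Nat.add_one_mul_choose_eq m j)
    push_cast at h
    rw [Nat.add_sub_add_right]
    linear_combination (-(x ^ (j + 1)) * y ^ (m - j)) * h

namespace STIT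

local notation "unitSquare" => SProd.sprod (Ioc (0 : ℝ) 1) (Ioc (0 : ℝ) 1)

section Pointwise

variable {a b : ℝ}

lemma one_le_denom (ha₀ : 0 ≤ a) (hb₀ : 0 ≤ b) (hb₁ : b ≤ 1) : 1 ≤ 3 - (1 - a) * (2 - b) := by
  nlinarith [mul_nonneg ha₀ (sub_nonneg.2 hb₁)]

lemma denom_le_three (ha₁ : a ≤ 1) (hb₁ : b ≤ 1) : 3 - (1 - a) * (2 - b) ≤ 3 := by
  nlinarith [mul_nonneg (sub_nonneg.2 ha₁) (show (0 : ℝ) ≤ 2 - b by linarith)]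

lemma three_mul_le_numer (ha₁ : a ≤ 1) (hb₀ : 0 ≤ b) : 3 * a ≤ 3 - (1 - a) * (3 - b) := by
  nlinarith [mul_nonneg (sub_nonneg.2 ha₁) hb₀]

lemma numer_div_denom_le (ha₀ : 0 ≤ a) (hb₀ : 0 ≤ b) (hb₁ : b ≤ 1) :
    (3 - (1 - a) * (3 - b)) / (3 - (1 - a) * (2 - b)) ≤ (2 + a) / 3 := by
  rw [div_le_div_iff₀ (by linarith [one_le_denom ha₀ hb₀ hb₁]) three_pos]
  nlinarith [mul_nonneg (mul_self_nonneg (1 - a)) (show (0 : ℝ) ≤ 2 - b by linarith)]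

lemma G_integrand_ge (m : ℕ) (ha₀ : 0 ≤ a) (ha₁ : a ≤ 1) (hb₀ : 0 ≤ b) (hb₁ : b ≤ 1) :
    a ^ (m + 1) * (1 - a) ^ 3 / 9 ≤
      a * (1 - a) ^ 3 * (3 - (1 - a) * (3 - b)) ^ m / (3 - (1 - a) * (2 - b)) ^ (m + 2) := by
  have hD := one_le_denom ha₀ hb₀ hb₁
  have hS := three_mul_le_numer ha₁ hb₀
  have hratio : (3 * a) ^ m / 3 ^ (m + 2) ≤
      (3 - (1 - a) * (3 - b)) ^ m / (3 - (1 - a) * (2 - b)) ^ (m + 2) :=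
    div_le_div₀ (pow_nonneg (by linarith) m) (by gcongr) (by positivity)
      (by gcongr; exact denom_le_three ha₁ hb₁)
  calc a ^ (m + 1) * (1 - a) ^ 3 / 9 = a * (1 - a) ^ 3 * ((3 * a) ^ m / 3 ^ (m + 2)) := by
        rw [mul_pow, pow_add, pow_succ]
        field_simp
        ring
    _ ≤ _ := by
        rw [mul_div_assoc]
        gcongr

lemma H_integrand_le (m : ℕ) (ha₀ : 0 ≤ a) (ha₁ : a ≤ 1) (hb₀ : 0 ≤ b) (hb₁ : b ≤ 1) :
    b * (1 - a) ^ 4 * (3 - (1 - a) * (3 - b)) ^ m / (3 - (1 - a) * (2 - b)) ^ (m + 2) ≤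
      (1 - a) ^ 4 * ((2 + a) / 3) ^ m := by
  have hD := one_le_denom ha₀ hb₀ hb₁
  have hS : 0 ≤ 3 - (1 - a) * (3 - b) := by linarith [three_mul_le_numer ha₁ hb₀]
  have h1a : 0 ≤ 1 - a := by linarith
  calc _ ≤ (1 - a) ^ 4 * (3 - (1 - a) * (3 - b)) ^ m / (3 - (1 - a) * (2 - b)) ^ m := by
        refine div_le_div₀ (by positivity) ?_ (by positivity) (pow_le_pow_right₀ hD (by omega))
        rw [mul_assoc]
        exact mul_le_of_le_one_left (by positivity) hb₁
    _ = (1 - a) ^ 4 * ((3 - (1 - a) * (3 - b)) / (3 - (1 - a) * (2 - b))) ^ m := by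
        rw [div_pow, mul_div_assoc]
    _ ≤ _ := mul_le_mul_of_nonneg_left
        (pow_le_pow_left₀ (div_nonneg hS (by linarith)) (numer_div_denom_le ha₀ hb₀ hb₁) m)
        (by positivity)

end Pointwise

lemma integrableOn_unitSquare {F : ℝ × ℝ → ℝ}
    (hF : ContinuousOn F (Set.Icc 0 1 ×ˢ Set.Icc 0 1)) :
    IntegrableOn F unitSquare :=
  (hF.integrableOn_compact (isCompact_Icc.prod isCompact_Icc)).mono_set
    (prod_mono Ioc_subset_Icc_self Ioc_subset_Icc_self)

lemma integrableOn_div_denom_pow {N : ℝ × ℝ → ℝ} (hN : Continuous N) (k : ℕ) :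
    IntegrableOn (fun z => N z / (3 - (1 - z.1) * (2 - z.2)) ^ k) unitSquare :=
  integrableOn_unitSquare <| hN.continuousOn.div (by fun_prop) fun z hz =>
    pow_ne_zero _ (by linarith [one_le_denom hz.1.1 hz.2.1 hz.2.2])

lemma setIntegral_unitSquare_comp_fst {g : ℝ → ℝ} (hg : Continuous g) :
    ∫ z in unitSquare, g z.1 = ∫ a in (0 : ℝ)..1, g a := by
  rw [← intervalIntegral_intervalIntegral_eq_setIntegral_prod (f := fun a _ => g a) zero_le_one
    zero_le_one (integrableOn_unitSquare (by fun_prop))]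
  simp

noncomputable def G (m : ℕ) : ℝ :=
  ∫ z in unitSquare,
    z.1 * (1 - z.1) ^ 3 * (3 - (1 - z.1) * (3 - z.2)) ^ m / (3 - (1 - z.1) * (2 - z.2)) ^ (m + 2)

noncomputable def H (m : ℕ) : ℝ :=
  ∫ z in unitSquare,
    z.2 * (1 - z.1) ^ 4 * (3 - (1 - z.1) * (3 - z.2)) ^ m / (3 - (1 - z.1) * (2 - z.2)) ^ (m + 2)

lemma p_succ (m : ℕ) : p (m + 1) = 9 * G m + 3 * H m := by
  rw [p, intervalIntegral_intervalIntegral_eq_setIntegral_prod zero_le_one zero_le_one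
      (integrableOn_div_denom_pow (by fun_prop) _), G, H, ← integral_const_mul,
    ← integral_const_mul, ← integral_const_mul,
    ← integral_add ((integrableOn_div_denom_pow (by fun_prop) _).const_mul _)
      ((integrableOn_div_denom_pow (by fun_prop) _).const_mul _)]
  congr 1
  ext z
  ring

lemma sum_integrand_pTX (n : ℕ) (a b : ℝ) :
    ∑ k ∈ range (n + 1), ((k : ℝ) * (3 * 2 ^ k * n.choose k)) *
      ((1 - a) ^ 3 * a ^ k * (1 - (1 - a) * (1 - b)) ^ (n - k) / (3 - (1 - a) * (2 - b)) ^ (n + 1))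
    = 6 * n * (a * (1 - a) ^ 3 * (3 - (1 - a) * (3 - b)) ^ (n - 1) /
      (3 - (1 - a) * (2 - b)) ^ (n + 1)) := by
  have hbinom := sum_mul_choose_mul_pow_mul_pow n (2 * a) (1 - (1 - a) * (1 - b))
  rw [show 2 * a + (1 - (1 - a) * (1 - b)) = 3 - (1 - a) * (3 - b) by ring] at hbinom
  calc _ = 3 * (1 - a) ^ 3 / (3 - (1 - a) * (2 - b)) ^ (n + 1) *
        ∑ k ∈ range (n + 1),
          (k : ℝ) * n.choose k * (2 * a) ^ k * (1 - (1 - a) * (1 - b)) ^ (n - k) := by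
        rw [mul_sum]
        refine sum_congr rfl fun k _ => ?_
        rw [mul_pow]
        ring
    _ = _ := by
        rw [hbinom]
        ring

lemma sum_mul_pTX (m : ℕ) :
    ∑ k ∈ range (m + 2), (k : ℝ) * pTX k (m + 1 - k) = 6 * (m + 1) * G m := by
  have hterm : ∀ k ∈ range (m + 2), (k : ℝ) * pTX k (m + 1 - k) =
      ∫ z in unitSquare, ((k : ℝ) * (3 * 2 ^ k * (m + 1).choose k)) *
        ((1 - z.1) ^ 3 * z.1 ^ k * (1 - (1 - z.1) * (1 - z.2)) ^ (m + 1 - k) /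
          (3 - (1 - z.1) * (2 - z.2)) ^ (m + 1 + 1)) := by
    intro k hk
    rw [pTX, Nat.add_sub_cancel' (mem_range_succ_iff.mp hk),
      intervalIntegral_intervalIntegral_eq_setIntegral_prod zero_le_one zero_le_one
        (integrableOn_div_denom_pow (by fun_prop) _), ← mul_assoc, ← integral_const_mul]
  rw [sum_congr rfl hterm, ← integral_finsetSum _
      fun k _ => (integrableOn_div_denom_pow (by fun_prop) _).const_mul _, G,
    ← integral_const_mul]
  congr 1
  ext z
  rw [sum_integrand_pTX]
  push_cast
  ring

lemma G_ge (m : ℕ) : (∫ x in (0 : ℝ)..1, x ^ (m + 1) * (1 - x) ^ 3) / 9 ≤ G m := by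
  rw [← intervalIntegral.integral_div, ← setIntegral_unitSquare_comp_fst (by fun_prop), G]
  exact setIntegral_mono_on (integrableOn_unitSquare (by fun_prop))
    (integrableOn_div_denom_pow (by fun_prop) _) (measurableSet_Ioc.prod measurableSet_Ioc)
    fun z hz => G_integrand_ge m hz.1.1.le hz.1.2 hz.2.1.le hz.2.2

lemma H_le (m : ℕ) : H m ≤ 243 * ∫ x in (0 : ℝ)..1, x ^ m * (1 - x) ^ 4 := by
  have hbound : H m ≤ ∫ a in (0 : ℝ)..1, (1 - a) ^ 4 * ((2 + a) / 3) ^ m := by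
    rw [← setIntegral_unitSquare_comp_fst (by fun_prop), H]
    exact setIntegral_mono_on (integrableOn_div_denom_pow (by fun_prop) _)
      (integrableOn_unitSquare (by fun_prop)) (measurableSet_Ioc.prod measurableSet_Ioc)
      fun z hz => H_integrand_le m hz.1.1.le hz.1.2 hz.2.1.le hz.2.2
  have hsubst : ∫ a in (0 : ℝ)..1, (1 - a) ^ 4 * ((2 + a) / 3) ^ m =
      243 * ∫ u in (2 / 3 : ℝ)..1, u ^ m * (1 - u) ^ 4 := by
    have h : (fun a : ℝ => (1 - a) ^ 4 * ((2 + a) / 3) ^ m) =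
        fun a => 81 * ((fun u : ℝ => u ^ m * (1 - u) ^ 4) ((1 / 3) * a + 2 / 3)) := by
      ext a
      ring
    rw [h, intervalIntegral.integral_const_mul,
      intervalIntegral.integral_comp_mul_add (f := fun u => u ^ m * (1 - u) ^ 4) (by norm_num)]
    norm_num
    ring
  have hmono :
      ∫ u in (2 / 3 : ℝ)..1, u ^ m * (1 - u) ^ 4 ≤ ∫ u in (0 : ℝ)..1, u ^ m * (1 - u) ^ 4 :=
    intervalIntegral.integral_mono_interval (by norm_num) (by norm_num) le_rfl
      ((ae_restrict_iff' measurableSet_Ioc).2 (ae_of_all _ fun u hu =>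
        mul_nonneg (pow_nonneg hu.1.le m) (pow_nonneg (by linarith [hu.2]) 4)))
      (Continuous.intervalIntegrable (by fun_prop) _ _)
  linarith

lemma G_pos (m : ℕ) : 0 < G m :=
  (div_pos (intervalIntegral.intervalIntegral_pos_of_pos_on
    (Continuous.intervalIntegrable (by fun_prop) _ _)
    (fun x hx => mul_pos (pow_pos hx.1 _) (pow_pos (sub_pos.2 hx.2) _)) one_pos)
    (by norm_num)).trans_le (G_ge m)

lemma H_nonneg (m : ℕ) : 0 ≤ H m :=
  setIntegral_nonneg (measurableSet_Ioc.prod measurableSet_Ioc) fun z hz =>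
    div_nonneg (mul_nonneg (mul_nonneg hz.2.1.le (by positivity))
      (pow_nonneg (by linarith [three_mul_le_numer hz.1.2 hz.2.1.le, hz.1.1]) m))
      (pow_nonneg (by linarith [one_le_denom hz.1.1.le hz.2.1.le hz.2.2]) _)

lemma pTgiven_succ (m : ℕ) : pTgiven (m + 1) = 2 * G m / (3 * G m + H m) := by
  have := G_pos m
  have := H_nonneg m
  rw [pTgiven, p_succ, sum_mul_pTX]
  field_simp
  push_cast
  ring

lemma abs_pTgiven_succ_sub_le (m : ℕ) : |pTgiven (m + 1) - 2 / 3| ≤ 1944 / (m + 1) := by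
  set B := ∫ x in (0 : ℝ)..1, x ^ (m + 1) * (1 - x) ^ 3
  have hG := G_ge m
  have hG₀ := G_pos m
  have hH₀ := H_nonneg m
  have hH : (m + 1) * H m ≤ 972 * B := by
    have hbeta := integral_pow_mul_one_sub_pow_succ m 3
    push_cast at hbeta
    nlinarith [H_le m]
  rw [pTgiven_succ, show 2 * G m / (3 * G m + H m) - 2 / 3 = -(2 * H m / (3 * (3 * G m + H m))) by
    field_simp; ring, abs_neg, abs_of_nonneg (by positivity)]
  calc 2 * H m / (3 * (3 * G m + H m)) ≤ 2 * H m / (9 * G m) :=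
        div_le_div_of_nonneg_left (by positivity) (by positivity) (by linarith)
    _ ≤ 1944 / (m + 1) := by
        rw [div_le_div_iff₀ (by positivity) (by positivity)]
        nlinarith

end STIT

theorem stit_pTgiven_limit :
    Filter.Tendsto pTgiven Filter.atTop (nhds (2/3)) := by
  rw [← tendsto_add_atTop_iff_nat 1, tendsto_iff_dist_tendsto_zero]
  refine squeeze_zero (fun _ => dist_nonneg) (fun m => ?_)
    ((tendsto_const_div_atTop_nhds_zero_nat 1944).comp (tendsto_add_atTop_nat 1))
  simpa [Real.dist_eq] using STIT.abs_pTgiven_succ_sub_le m
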